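/- In the set-based ticket protocol, the invariant 'active tickets are exactly recorded' holds: in every reachable state, every element of bag equals ticket(t) for some thread t with pc(t) ∈ {4,5,6}, and conversely if pc(t) ∈ {4,5,6} then ticket(t) ∈ bag. -/

import Mathlib

/-- Global state of the set-based ticket protocol. -/
structure SState (T : Type*) where
  avail : ℤ
  bag : Finset ℤ
  pc : T → Fin 8
  ticket : T → ℤ

/-- Initial condition: counter 0, empty bag, every thread at location 1 with ticket 0. -/
def SInit {T : Type*} (s : SState T) : Prop :=
  s.avail = 0 ∧ s.bag = ∅ ∧ (∀ t, s.pc t = 1) ∧ (∀ t, s.ticket t = 0)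

/-- The transitions of thread `a` in the set-based ticket protocol. -/
def SStep {T : Type*} [DecidableEq T] (a : T) (s s' : SState T) : Prop :=
  -- τ₁ : 1 → 2
  (s.pc a = 1 ∧ s'.pc = Function.update s.pc a 2 ∧ s'.ticket = s.ticket ∧
    s'.avail = s.avail ∧ s'.bag = s.bag) ∨
  -- τ₂ : 2 → 3
  (s.pc a = 2 ∧ s'.pc = Function.update s.pc a 3 ∧ s'.ticket = s.ticket ∧
    s'.avail = s.avail ∧ s'.bag = s.bag) ∨
  -- τ₃ : 3 → 4, takes a fresh ticket and announces it in the bag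
  (s.pc a = 3 ∧ s'.pc = Function.update s.pc a 4 ∧
    s'.ticket = Function.update s.ticket a s.avail ∧
    s'.avail = s.avail + 1 ∧ s'.bag = insert s.avail s.bag) ∨
  -- τ₄ : 4 → 5, guarded by bag ≠ ∅ and ticket(a) = min(bag)
  (s.pc a = 4 ∧ s.bag.Nonempty ∧ s.bag.min = (s.ticket a : WithBot ℤ) ∧
    s'.pc = Function.update s.pc a 5 ∧ s'.ticket = s.ticket ∧
    s'.avail = s.avail ∧ s'.bag = s.bag) ∨
  -- τ₅ : 5 → 6
  (s.pc a = 5 ∧ s'.pc = Function.update s.pc a 6 ∧ s'.ticket = s.ticket ∧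
    s'.avail = s.avail ∧ s'.bag = s.bag) ∨
  -- τ₆ : 6 → 7, removes the ticket from the bag
  (s.pc a = 6 ∧ s'.pc = Function.update s.pc a 7 ∧ s'.ticket = s.ticket ∧
    s'.avail = s.avail ∧ s'.bag = s.bag.erase (s.ticket a)) ∨
  -- τ₇ : 7 → 1
  (s.pc a = 7 ∧ s'.pc = Function.update s.pc a 1 ∧ s'.ticket = s.ticket ∧
    s'.avail = s.avail ∧ s'.bag = s.bag)

/-- A state is reachable if obtained from an initial state by finitely many transitions. -/
def SReachable {T : Type*} [DecidableEq T] (s : SState T) : Prop :=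
  ∃ s₀, SInit s₀ ∧ Relation.ReflTransGen (fun u v => ∃ a, SStep a u v) s₀ s

def SAct {T : Type*} (s : SState T) (t : T) : Prop :=
  s.pc t = 4 ∨ s.pc t = 5 ∨ s.pc t = 6

def SInv {T : Type*} (s : SState T) : Prop :=
  (∀ x ∈ s.bag, x < s.avail) ∧
  (∀ t, SAct s t → s.ticket t ∈ s.bag) ∧
  (∀ x ∈ s.bag, ∃ t, SAct s t ∧ s.ticket t = x) ∧
  (∀ t t', SAct s t → SAct s t' → s.ticket t = s.ticket t' → t = t')

lemma SInv_step {T : Type*} [DecidableEq T] {a : T} {s s' : SState T}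
    (h : SInv s) (hs : SStep a s s') : SInv s' := by
  obtain ⟨hbd, hmem, hsurj, hinj⟩ := h
  rcases hs with ⟨hpc, hpc', ht', ha', hb'⟩ | ⟨hpc, hpc', ht', ha', hb'⟩ |
    ⟨hpc, hpc', ht', ha', hb'⟩ | ⟨hpc, _, _, hpc', ht', ha', hb'⟩ |
    ⟨hpc, hpc', ht', ha', hb'⟩ | ⟨hpc, hpc', ht', ha', hb'⟩ |
    ⟨hpc, hpc', ht', ha', hb'⟩
  case inr.inr.inl =>
    -- τ₃ : 3 → 4
    refine ⟨?_, ?_, ?_, ?_⟩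
    · intro x hx
      rw [hb'] at hx; rw [ha']
      rcases Finset.mem_insert.1 hx with rfl | hx
      · omega
      · have := hbd x hx; omega
    · intro t htact
      rw [hb', ht']
      by_cases hta : t = a
      · subst hta; simp
      · have : SAct s t := by
          simpa [SAct, hpc', Function.update_apply, hta] using htact
        rw [Function.update_apply]; simp only [if_neg hta]
        exact Finset.mem_insert_of_mem (hmem t this)
    · intro x hx
      rw [hb'] at hx
      rcases Finset.mem_insert.1 hx with rfl | hx
      · exact ⟨a, by simp [SAct, hpc'], by simp [ht']⟩
      · obtain ⟨t, htact, htk⟩ := hsurj x hx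
        have hta : t ≠ a := by rintro rfl; simp [SAct, hpc] at htact
        exact ⟨t, by simpa [SAct, hpc', Function.update_apply, hta] using htact,
          by simp [ht', Function.update_apply, hta, htk]⟩
    · intro t t' ht1 ht2 heq
      rw [ht'] at heq
      by_cases h1 : t = a <;> by_cases h2 : t' = a
      · rw [h1, h2]
      · subst h1
        have : SAct s t' := by
          simpa [SAct, hpc', Function.update_apply, h2] using ht2
        have hb := hbd _ (hmem t' this)
        simp [Function.update_apply, h2] at heq
        omega
      · subst h2
        have : SAct s t := by
          simpa [SAct, hpc', Function.update_apply, h1] using ht1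
        have hb := hbd _ (hmem t this)
        simp [Function.update_apply, h1] at heq
        omega
      · have ha1 : SAct s t := by
          simpa [SAct, hpc', Function.update_apply, h1] using ht1
        have ha2 : SAct s t' := by
          simpa [SAct, hpc', Function.update_apply, h2] using ht2
        simp [Function.update_apply, h1, h2] at heq
        exact hinj t t' ha1 ha2 heq
  case inr.inr.inr.inr.inr.inl =>
    -- τ₆ : 6 → 7
    refine ⟨?_, ?_, ?_, ?_⟩
    · intro x hx
      rw [hb'] at hx; rw [ha']
      exact hbd x (Finset.mem_of_mem_erase hx)
    · intro t htact
      have hta : t ≠ a := by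
        rintro rfl; simp [SAct, hpc'] at htact
      have hact : SAct s t := by
        simpa [SAct, hpc', Function.update_apply, hta] using htact
      have haact : SAct s a := Or.inr (Or.inr hpc)
      rw [hb', ht']
      exact Finset.mem_erase.2 ⟨fun he => hta (hinj t a hact haact he), hmem t hact⟩
    · intro x hx
      rw [hb'] at hx
      obtain ⟨hne, hx⟩ := Finset.mem_erase.1 hx
      obtain ⟨t, htact, htk⟩ := hsurj x hx
      have hta : t ≠ a := by rintro rfl; exact hne htk.symm
      exact ⟨t, by simpa [SAct, hpc', Function.update_apply, hta] using htact,
        by simp [ht', htk]⟩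
    · intro t t' ht1 ht2 heq
      have h1 : t ≠ a := by rintro rfl; simp [SAct, hpc'] at ht1
      have h2 : t' ≠ a := by rintro rfl; simp [SAct, hpc'] at ht2
      exact hinj t t'
        (by simpa [SAct, hpc', Function.update_apply, h1] using ht1)
        (by simpa [SAct, hpc', Function.update_apply, h2] using ht2)
        (by rw [ht'] at heq; exact heq)
  all_goals {
    have key : ∀ u, SAct s' u → SAct s u := by
      intro u
      by_cases hua : u = a
      · subst hua
        simp only [SAct, hpc', Function.update_self, hpc]
        decide
      · simp [SAct, hpc', Function.update_apply, hua]
    have key' : ∀ u, SAct s u → SAct s' u := by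
      intro u
      by_cases hua : u = a
      · subst hua
        simp only [SAct, hpc', Function.update_self, hpc]
        decide
      · simp [SAct, hpc', Function.update_apply, hua]
    refine ⟨?_, ?_, ?_, ?_⟩
    · intro x hx; rw [hb'] at hx; rw [ha']; exact hbd x hx
    · intro t htact; rw [hb', ht']; exact hmem t (key t htact)
    · intro x hx
      rw [hb'] at hx
      obtain ⟨t, htact, htk⟩ := hsurj x hx
      exact ⟨t, key' t htact, by rw [ht']; exact htk⟩
    · intro t t' ht1 ht2 heq
      rw [ht'] at heq
      exact hinj t t' (key t ht1) (key t' ht2) heq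
  }

theorem setTicket_bag_records_active {T : Type*} [DecidableEq T] :
    ∀ s : SState T, SReachable s →
      (∀ x ∈ s.bag, ∃ t, (s.pc t = 4 ∨ s.pc t = 5 ∨ s.pc t = 6) ∧ s.ticket t = x) ∧
      (∀ t, (s.pc t = 4 ∨ s.pc t = 5 ∨ s.pc t = 6) → s.ticket t ∈ s.bag) := by
  intro s ⟨s₀, ⟨_, hbag, hpc, _⟩, hsteps⟩
  have hinv : SInv s := by
    induction hsteps with
    | refl =>
      refine ⟨?_, ?_, ?_, ?_⟩ <;> simp_all [SAct, SInv]
    | tail _ step ih =>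
      obtain ⟨a, hstep⟩ := step
      exact SInv_step ih hstep
  exact ⟨hinv.2.2.1, hinv.2.1⟩
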